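/- Let π₋ : S³ ∖ H → S¹ be defined by π₋(z₁,z₂) = z₁·conj(z₂)/|z₁z₂|. Then the map h₋ : S³ ∖ H → S¹ × S¹ × (0,1), h₋(z₁,z₂) = (z₁·conj(z₂)/|z₁z₂|, z₁/|z₁|, |z₁|), is a homeomorphism satisfying pr₁ ∘ h₋ = π₋ (with pr₁ the projection onto the first factor). In particular π₋ is a trivial fiber bundle projection, and each page π₋⁻¹(u), u ∈ S¹, is homeomorphic to the open annulus S¹ × (0,1). -/

import Mathlib

noncomputable section

/-- The unit 3-sphere in ℂ². -/
def S3 : Set (ℂ × ℂ) := {p | ‖p.1‖ ^ 2 + ‖p.2‖ ^ 2 = 1}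

/-- The unit circle in ℂ. -/
def S1 : Set ℂ := {w | ‖w‖ = 1}

/-- The Hopf link `H = {(z₁,z₂) ∈ S³ : z₁z₂ = 0}`. -/
def hopfLink : Set (ℂ × ℂ) := {p ∈ S3 | p.1 * p.2 = 0}

/-- The fibration `π₋(z₁,z₂) = z₁·conj(z₂)/|z₁z₂|` of the complement of the negative
Hopf link. -/
def piMinus (p : ℂ × ℂ) : ℂ :=
  p.1 * (starRingEnd ℂ) p.2 / (‖p.1 * p.2‖ : ℂ)


open Set Complex ComplexConjugate

/-! In polar form `z₁ = r v`, `z₂ = s w` with `r, s > 0`, `r² + s² = 1` and `|v| = |w| = 1`, one has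
`π₋(z₁, z₂) = v w̄`, so `(π₋, v, r)` recovers the point as `(r v, √(1 - r²) · conj(π₋) · v)`.
Once `h₋` is a homeomorphism over `S¹`, each page is the fibre of `pr₁ : S¹ × (S¹ × (0,1)) → S¹`. -/

namespace Homeomorph

variable {X B F : Type*} [TopologicalSpace X] [TopologicalSpace B] [TopologicalSpace F]

def subtypeSubtypeEquivSubtypeInter (p q : X → Prop) :
    {x : Subtype p // q x.1} ≃ₜ {x // p x ∧ q x} where
  toEquiv := Equiv.subtypeSubtypeEquivSubtypeInter p q
  continuous_toFun :=
    (continuous_subtype_val.comp continuous_subtype_val).subtype_mk _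
  continuous_invFun :=
    (continuous_subtype_val.subtype_mk _).subtype_mk _

def subtypeFstEq (b : B) : {y : B × F // y.1 = b} ≃ₜ F where
  toFun y := y.1.2
  invFun f := ⟨(b, f), rfl⟩
  left_inv := fun ⟨(_, _), hy⟩ => by subst hy; rfl
  right_inv _ := rfl
  continuous_toFun := by fun_prop
  continuous_invFun := by fun_prop

def fiberHomeomorph (e : X ≃ₜ B × F) (b : B) {p : X → Prop} (hp : ∀ x, p x ↔ (e x).1 = b) :
    {x // p x} ≃ₜ F :=
  (e.subtype hp).trans (subtypeFstEq b)

end Homeomorph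

lemma norm_div_norm_self {z : ℂ} (hz : z ≠ 0) : ‖z / (‖z‖ : ℂ)‖ = 1 := by
  simp [hz]

lemma norm_mul_div_norm_self (z : ℂ) : (‖z‖ : ℂ) * (z / ‖z‖) = z := by
  rcases eq_or_ne z 0 with rfl | hz
  · simp
  · exact mul_div_cancel₀ z (by simpa using hz)

lemma ofReal_mul_div_norm {r : ℝ} {v : ℂ} (hr : 0 < r) (hv : ‖v‖ = 1) :
    (r * v) / (‖(r : ℂ) * v‖ : ℂ) = v := by
  simp [hv, abs_of_pos hr, hr.ne']

lemma conj_mul_self_of_norm_eq_one {v : ℂ} (hv : ‖v‖ = 1) : conj v * v = 1 := by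
  simp [conj_mul', hv]

lemma piMinus_eq (p : ℂ × ℂ) : piMinus p = p.1 / ‖p.1‖ * conj (p.2 / ‖p.2‖) := by
  simp only [piMinus, norm_mul, map_div₀, conj_ofReal, ofReal_mul]
  ring

lemma ne_zero_of_mem_S3_diff_hopfLink {p : ℂ × ℂ} (hp : p ∈ S3 \ hopfLink) :
    p.1 ≠ 0 ∧ p.2 ≠ 0 :=
  mul_ne_zero_iff.mp fun h => hp.2 ⟨hp.1, h⟩

lemma norm_fst_mem_Ioo {p : ℂ × ℂ} (hp : p ∈ S3 \ hopfLink) : ‖p.1‖ ∈ Ioo (0 : ℝ) 1 := by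
  obtain ⟨h₁, h₂⟩ := ne_zero_of_mem_S3_diff_hopfLink hp
  have hsum : ‖p.1‖ ^ 2 + ‖p.2‖ ^ 2 = 1 := hp.1
  have := norm_pos_iff.mpr h₂
  exact ⟨norm_pos_iff.mpr h₁, by nlinarith⟩

lemma piMinus_mem_S1 {p : ℂ × ℂ} (hp : p ∈ S3 \ hopfLink) : piMinus p ∈ S1 := by
  obtain ⟨h₁, h₂⟩ := ne_zero_of_mem_S3_diff_hopfLink hp
  simp only [S1, mem_ofPred_eq, piMinus_eq, norm_mul, RCLike.norm_conj, norm_div_norm_self h₁,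
    norm_div_norm_self h₂, mul_one]

def hMinusInvFun (u v : ℂ) (r : ℝ) : ℂ × ℂ :=
  (r * v, √(1 - r ^ 2) * (conj u * v))

lemma norm_hMinusInvFun_fst {u v : ℂ} {r : ℝ} (hv : v ∈ S1) (hr : 0 ≤ r) :
    ‖(hMinusInvFun u v r).1‖ = r := by
  simp [hMinusInvFun, hv.out, abs_of_nonneg hr]

lemma norm_hMinusInvFun_snd {u v : ℂ} {r : ℝ} (hu : u ∈ S1) (hv : v ∈ S1) :
    ‖(hMinusInvFun u v r).2‖ = √(1 - r ^ 2) := by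
  simp [hMinusInvFun, hu.out, hv.out]

lemma hMinusInvFun_mem {u v : ℂ} {r : ℝ} (hu : u ∈ S1) (hv : v ∈ S1) (hr : r ∈ Ioo (0 : ℝ) 1) :
    hMinusInvFun u v r ∈ S3 \ hopfLink := by
  have hs : 0 < 1 - r ^ 2 := by nlinarith [hr.1, hr.2]
  have h₁ : ‖(hMinusInvFun u v r).1‖ = r := norm_hMinusInvFun_fst hv hr.1.le
  have h₂ : ‖(hMinusInvFun u v r).2‖ = √(1 - r ^ 2) := norm_hMinusInvFun_snd hu hv
  refine ⟨?_, fun h => ?_⟩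
  · change ‖_‖ ^ 2 + ‖_‖ ^ 2 = 1
    rw [h₁, h₂, Real.sq_sqrt hs.le]
    ring
  · have := congrArg norm h.2
    rw [norm_mul, h₁, h₂, norm_zero] at this
    exact (mul_pos hr.1 (Real.sqrt_pos.mpr hs)).ne' this

lemma piMinus_hMinusInvFun {u v : ℂ} {r : ℝ} (hu : u ∈ S1) (hv : v ∈ S1)
    (hr : r ∈ Ioo (0 : ℝ) 1) : piMinus (hMinusInvFun u v r) = u := by
  have hs : 0 < √(1 - r ^ 2) := Real.sqrt_pos.mpr (by nlinarith [hr.1, hr.2])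
  have huv : ‖conj u * v‖ = 1 := by simp [hu.out, hv.out]
  rw [piMinus_eq, hMinusInvFun, ofReal_mul_div_norm hr.1 hv, ofReal_mul_div_norm hs huv]
  simp only [map_mul, conj_conj]
  linear_combination u * conj_mul_self_of_norm_eq_one hv.out

lemma hMinusInvFun_piMinus {p : ℂ × ℂ} (hp : p ∈ S3 \ hopfLink) :
    hMinusInvFun (piMinus p) (p.1 / ‖p.1‖) ‖p.1‖ = p := by
  have hnorm₂ : √(1 - ‖p.1‖ ^ 2) = ‖p.2‖ := by
    rw [← hp.1.out, add_sub_cancel_left, Real.sqrt_sq (norm_nonneg _)]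
  have hv : conj (p.1 / ‖p.1‖) * (p.1 / ‖p.1‖) = 1 :=
    conj_mul_self_of_norm_eq_one (norm_div_norm_self (ne_zero_of_mem_S3_diff_hopfLink hp).1)
  ext1
  · exact norm_mul_div_norm_self p.1
  · rw [hMinusInvFun, hnorm₂, piMinus_eq, map_mul, conj_conj]
    linear_combination (↑‖p.2‖ * (p.2 / ↑‖p.2‖)) * hv + norm_mul_div_norm_self p.2

def hMinus : (S3 \ hopfLink : Set (ℂ × ℂ)) ≃ₜ (S1 × S1 × Ioo (0 : ℝ) 1) where
  toFun p := (⟨piMinus p, piMinus_mem_S1 p.2⟩,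
    ⟨p.1.1 / ‖p.1.1‖, norm_div_norm_self (ne_zero_of_mem_S3_diff_hopfLink p.2).1⟩,
    ⟨‖p.1.1‖, norm_fst_mem_Ioo p.2⟩)
  invFun q := ⟨hMinusInvFun q.1 q.2.1 q.2.2, hMinusInvFun_mem q.1.2 q.2.1.2 q.2.2.2⟩
  left_inv p := Subtype.ext (hMinusInvFun_piMinus p.2)
  right_inv := fun ⟨⟨u, hu⟩, ⟨v, hv⟩, ⟨r, hr⟩⟩ => by
    ext1
    · exact Subtype.ext (piMinus_hMinusInvFun hu hv hr)
    ext1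
    · exact Subtype.ext (ofReal_mul_div_norm hr.1 hv)
    · exact Subtype.ext (norm_hMinusInvFun_fst hv hr.1.le)
  continuous_toFun := by
    have h₁ : ∀ p : (S3 \ hopfLink : Set (ℂ × ℂ)), (‖p.1.1‖ : ℂ) ≠ 0 := fun p => by
      simpa using (ne_zero_of_mem_S3_diff_hopfLink p.2).1
    have h₂ : ∀ p : (S3 \ hopfLink : Set (ℂ × ℂ)), (‖p.1.1 * p.1.2‖ : ℂ) ≠ 0 := fun p => by
      simpa using ne_zero_of_mem_S3_diff_hopfLink p.2
    simp only [piMinus]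
    fun_prop (disch := assumption)
  continuous_invFun := by
    simp only [hMinusInvFun]
    fun_prop

/-- The map `h₋(z₁,z₂) = (z₁·conj(z₂)/|z₁z₂|, z₁/|z₁|, |z₁|)` is a homeomorphism from
`S³ ∖ H` to `S¹ × S¹ × (0,1)` whose first component is `π₋`; in particular `π₋` is a
trivial fiber bundle projection and each page `π₋⁻¹(u)` is homeomorphic to the open
annulus `S¹ × (0,1)`. -/
theorem open_book_negative_hopf_trivial_annulus_bundle :
    (∃ h : (S3 \ hopfLink : Set (ℂ × ℂ)) ≃ₜ (↥S1 × ↥S1 × ↥(Set.Ioo (0:ℝ) 1)),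
      ∀ p : (S3 \ hopfLink : Set (ℂ × ℂ)),
        ((h p).1 : ℂ) = piMinus p.val ∧
        ((h p).2.1 : ℂ) = p.val.1 / (‖p.val.1‖ : ℂ) ∧
        ((h p).2.2 : ℝ) = ‖p.val.1‖) ∧
    ∀ u : ℂ, u ∈ S1 →
      Nonempty
        ((({p : ℂ × ℂ | p ∈ S3 \ hopfLink ∧ piMinus p = u}) : Set (ℂ × ℂ)) ≃ₜ
          (↥S1 × ↥(Set.Ioo (0:ℝ) 1))) := by
  refine ⟨⟨hMinus, fun p => ⟨rfl, rfl, rfl⟩⟩, fun u hu => ⟨?_⟩⟩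
  exact (Homeomorph.subtypeSubtypeEquivSubtypeInter (· ∈ S3 \ hopfLink) (piMinus · = u)).symm.trans
    (hMinus.fiberHomeomorph ⟨u, hu⟩ fun p =>
      (Subtype.ext_iff (a1 := (hMinus p).1) (a2 := ⟨u, hu⟩)).symm)
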